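/- arXiv:1612.05953 — 5 statements merged into one kernel-verified Lean document; each statement's English description precedes it below -/
import Mathlib

section
/- For every t₀ ∈ [0,2) there exist a point (a,b) lying in some member of 𝕊 and a real ε > 0 with t₀ + ε ≤ 2 such that f_𝕊(t₀) = (1 − t₀/2)·a + (t₀/2)·b and f_𝕊(s) = f_𝕊(t₀) − ((a − b)/2)·(s − t₀) for all s ∈ [t₀, t₀ + ε]. In particular, the right-hand slope of f_𝕊 at t₀ equals −(a−b)/2 for some lattice point (a,b) ∈ ⋃𝕊 realizing the value f_𝕊(t₀). -/
/-!
Each lattice point `(a, b)` gives an affine function `t ↦ (1 - t/2) a + (t/2) b`, and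
`f_𝕊` is a max-min of finitely many of them. The difference of two affine functions has
constant sign on `(t₀, t₀ + ε]` once `ε` is small, so on `[t₀, t₀ + ε]` the relative order
of all the lines is the one they have at `t₀ + ε`. Hence the point realizing the max-min at
`t₀ + ε` realizes it on the whole interval, and `f_𝕊` agrees there with its line.
-/

open Filter Topology Set

section MaxMin

variable {ι α : Type*} [LinearOrder α]

def IsMaxMinWitness (𝕊 : Finset (Finset ι)) (φ : ι → α) (p : ι) : Prop :=
  ∃ S ∈ 𝕊, p ∈ S ∧ (∀ q ∈ S, φ p ≤ φ q) ∧ ∀ T ∈ 𝕊, ∃ q ∈ T, φ q ≤ φ p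

theorem IsMaxMinWitness.sup'_inf'_eq {𝕊 : Finset (Finset ι)} (hS : 𝕊.Nonempty)
    (hSne : ∀ S ∈ 𝕊, S.Nonempty) {φ : ι → α} {p : ι} (hp : IsMaxMinWitness 𝕊 φ p) :
    𝕊.attach.sup' (Finset.attach_nonempty_iff.mpr hS) (fun S => S.1.inf' (hSne S.1 S.2) φ)
      = φ p := by
  obtain ⟨S, hS𝕊, hpS, hmin, hmax⟩ := hp
  refine le_antisymm (Finset.sup'_le _ _ fun T _ => ?_) ?_
  · obtain ⟨q, hqT, hqp⟩ := hmax T.1 T.2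
    exact Finset.inf'_le_of_le _ hqT hqp
  · exact Finset.le_sup'_of_le _ (Finset.mem_attach _ ⟨S, hS𝕊⟩) (Finset.le_inf' _ _ hmin)

theorem exists_isMaxMinWitness {𝕊 : Finset (Finset ι)} (hS : 𝕊.Nonempty)
    (hSne : ∀ S ∈ 𝕊, S.Nonempty) (φ : ι → α) : ∃ p, IsMaxMinWitness 𝕊 φ p := by
  obtain ⟨S, -, hSmax⟩ := Finset.exists_mem_eq_sup' (Finset.attach_nonempty_iff.mpr hS)
    fun S : 𝕊 => S.1.inf' (hSne S.1 S.2) φ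
  obtain ⟨p, hpS, hpmin⟩ := Finset.exists_mem_eq_inf' (hSne S.1 S.2) φ
  refine ⟨p, S.1, S.2, hpS, fun q hq => hpmin ▸ Finset.inf'_le φ hq, fun T hT => ?_⟩
  obtain ⟨q, hqT, hqmin⟩ := Finset.exists_mem_eq_inf' (hSne T hT) φ
  refine ⟨q, hqT, ?_⟩
  rw [← hqmin, ← hpmin, ← hSmax]
  exact Finset.le_sup' (fun S : 𝕊 => S.1.inf' (hSne S.1 S.2) φ) (Finset.mem_attach _ ⟨T, hT⟩)

theorem IsMaxMinWitness.of_order_preserving {𝕊 : Finset (Finset ι)} {φ ψ : ι → α} {p : ι}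
    (hp : IsMaxMinWitness 𝕊 φ p)
    (horder : ∀ S ∈ 𝕊, ∀ T ∈ 𝕊, ∀ q ∈ S, ∀ r ∈ T, φ q ≤ φ r → ψ q ≤ ψ r) :
    IsMaxMinWitness 𝕊 ψ p := by
  obtain ⟨S, hS𝕊, hpS, hmin, hmax⟩ := hp
  refine ⟨S, hS𝕊, hpS, fun q hq => horder S hS𝕊 S hS𝕊 p hpS q hq (hmin q hq), fun T hT => ?_⟩
  obtain ⟨q, hqT, hqp⟩ := hmax T hT
  exact ⟨q, hqT, horder T hT S hS𝕊 q hqT p hpS hqp⟩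

end MaxMin

theorem min_le_affine_of_mem_Icc {a b t₀ s₁ s : ℝ} (hs : s ∈ Icc t₀ s₁) :
    min (a + b * t₀) (a + b * s₁) ≤ a + b * s := by
  rcases le_total 0 b with hb | hb
  · exact min_le_of_left_le (by nlinarith [hs.1])
  · exact min_le_of_right_le (by nlinarith [hs.2])

theorem eventually_nonneg_affine_Icc (a b t₀ : ℝ) :
    ∀ᶠ s₁ in 𝓝[>] t₀, 0 ≤ a + b * s₁ → ∀ s ∈ Icc t₀ s₁, 0 ≤ a + b * s := by
  by_cases h₀ : 0 ≤ a + b * t₀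
  · exact Eventually.of_forall fun s₁ h₁ s hs =>
      (le_min h₀ h₁).trans (min_le_affine_of_mem_Icc hs)
  · have hneg : ∀ᶠ s₁ in 𝓝 t₀, a + b * s₁ < 0 :=
      ContinuousAt.eventually_lt (by fun_prop) continuousAt_const (not_le.mp h₀)
    exact (hneg.filter_mono nhdsWithin_le_nhds).mono fun s₁ hs₁ h₁ => absurd h₁ (not_le.mpr hs₁)

/-- The `j_t`-grading of a lattice point `p = (j₀, j₂)`. -/
noncomputable def latticeLine (t : ℝ) (p : ℤ × ℤ) : ℝ := (1 - t / 2) * (p.1 : ℝ) + (t / 2) * (p.2 : ℝ)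

theorem eventually_latticeLine_le_Icc (t₀ : ℝ) (q r : ℤ × ℤ) :
    ∀ᶠ s₁ in 𝓝[>] t₀, latticeLine s₁ q ≤ latticeLine s₁ r →
      ∀ s ∈ Icc t₀ s₁, latticeLine s q ≤ latticeLine s r := by
  have hdiff : ∀ s, latticeLine s r - latticeLine s q =
      (r.1 - q.1 : ℝ) + ((r.2 - r.1 - (q.2 - q.1) : ℝ) / 2) * s := fun s => by
    unfold latticeLine; ring
  filter_upwards [eventually_nonneg_affine_Icc (r.1 - q.1 : ℝ) ((r.2 - r.1 - (q.2 - q.1)) / 2) t₀]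
    with s₁ h hle s hs
  have := h (by rw [← hdiff]; linarith) s hs
  rw [← hdiff] at this
  linarith

/-- For every `t₀ ∈ [0,2)` there is a lattice point `(a,b)` lying in some member of `𝕊`
realizing the value `f t₀` and an `ε > 0` with `t₀ + ε ≤ 2` such that `f` is affine of
slope `-(a-b)/2` on `[t₀, t₀ + ε]`. -/
theorem maxmin_right_slope
    (𝕊 : Finset (Finset (ℤ × ℤ))) (hS : 𝕊.Nonempty)
    (hSne : ∀ S ∈ 𝕊, S.Nonempty)
    (f : ℝ → ℝ)
    (hf : ∀ t : ℝ, f t =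
      𝕊.attach.sup' (Finset.attach_nonempty_iff.mpr hS) fun S =>
        (S.1).inf' (hSne S.1 S.2) fun p =>
          (1 - t / 2) * (p.1 : ℝ) + (t / 2) * (p.2 : ℝ))
    (t₀ : ℝ) (ht₀ : t₀ ∈ Set.Ico (0 : ℝ) 2) :
    ∃ (a b : ℤ) (S : Finset (ℤ × ℤ)), S ∈ 𝕊 ∧ (a, b) ∈ S ∧
      ∃ ε : ℝ, 0 < ε ∧ t₀ + ε ≤ 2 ∧
        f t₀ = (1 - t₀ / 2) * (a : ℝ) + (t₀ / 2) * (b : ℝ) ∧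
        ∀ s ∈ Set.Icc t₀ (t₀ + ε),
          f s = f t₀ - (((a : ℝ) - (b : ℝ)) / 2) * (s - t₀) := by
  have hev : ∀ᶠ s₁ in 𝓝[>] t₀, s₁ < 2 ∧ ∀ S ∈ 𝕊, ∀ T ∈ 𝕊, ∀ q ∈ S, ∀ r ∈ T,
      latticeLine s₁ q ≤ latticeLine s₁ r →
        ∀ s ∈ Icc t₀ s₁, latticeLine s q ≤ latticeLine s r := by
    simp only [eventually_and, eventually_all_finset]
    exact ⟨(eventually_lt_nhds ht₀.2).filter_mono nhdsWithin_le_nhds,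
      fun _ _ _ _ q _ r _ => eventually_latticeLine_le_Icc t₀ q r⟩
  obtain ⟨s₁, ⟨hs₁2, horder⟩, hts₁ : t₀ < s₁⟩ := (hev.and self_mem_nhdsWithin).exists
  obtain ⟨p, hp⟩ := exists_isMaxMinWitness hS hSne (latticeLine s₁)
  have hfp : ∀ s ∈ Icc t₀ s₁, f s = latticeLine s p := fun s hs =>
    (hf s).trans ((hp.of_order_preserving fun S hS' T hT q hq r hr h =>
      horder S hS' T hT q hq r hr h s hs).sup'_inf'_eq hS hSne)
  obtain ⟨S, hS𝕊, hpS, -⟩ := hp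
  have hft₀ := hfp t₀ ⟨le_rfl, hts₁.le⟩
  refine ⟨p.1, p.2, S, hS𝕊, hpS, s₁ - t₀, by linarith, by linarith, hft₀, fun s hs => ?_⟩
  rw [add_sub_cancel] at hs
  rw [hfp s hs, hft₀]
  unfold latticeLine
  ring
end

section
/- Let K be a field, and let (V, (vᵢ)_{i∈ι}, w, d, F) and (V′, (v′ⱼ)_{j∈ι′}, w′, d′, F′) be two finite-dimensional weight-filtered complexes as in the context. Suppose f : V → V′, g : V′ → V, H : V → V, H′ : V′ → V′ are linear maps satisfying: f ∘ d = d′ ∘ f, g ∘ d′ = d ∘ g, g ∘ f − id_V = H ∘ d + d ∘ H, f ∘ g − id_{V′} = H′ ∘ d′ + d′ ∘ H′, and all four maps are filtered, i.e., f(F_s) ⊆ F′_s, g(F′_s) ⊆ F_s, H(F_s) ⊆ F_s, H′(F′_s) ⊆ F′_s for all s ∈ ℝ. Then for every cycle x ∈ V (d x = 0) with x ∉ range d, the element f(x) is a cycle in V′ with f(x) ∉ range d′, and Gr′(f(x)) = Gr(x). -/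
/-!
Both directions of the comparison come from the same observation: a filtered chain map `f`
sends a representative `x + d u ∈ F_s` of a class to the representative `f x + d' (f u) ∈ F'_s`
of its image. Applying this to `f` and to `g`, and using that `g (f x) = x + d (H x)` lies in the
class of `x`, the sets of levels whose supremum defines the grading coincide.
-/

/-- The `s`-th piece of the descending ℝ-filtration induced by the weight function `w`
on the basis `v`: the span of the basis vectors of weight at least `s`. -/
noncomputable def filtSub {K V : Type*} [Field K] [AddCommGroup V] [Module K V]
    {ι : Type*} (v : Module.Basis ι K V) (w : ι → ℝ) (s : ℝ) : Submodule K V :=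
  Submodule.span K (Set.range fun i : {i : ι // s ≤ w i} => v i.1)

/-- The filtration grading of the homology class of a cycle `x`:
`Gr(x) = sSup {s | ∃ u, x + d u ∈ F_s}`. -/
noncomputable def filtGr {K V : Type*} [Field K] [AddCommGroup V] [Module K V]
    {ι : Type*} (v : Module.Basis ι K V) (w : ι → ℝ) (d : V →ₗ[K] V) (x : V) : ℝ :=
  sSup {s : ℝ | ∃ u : V, x + d u ∈ filtSub v w s}

section HomologyLevels

variable {R M N σ : Type*} [Ring R] [AddCommGroup M] [Module R M] [AddCommGroup N] [Module R N]

def homologyLevels (F : σ → Submodule R M) (d : M →ₗ[R] M) (x : M) : Set σ :=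
  {s | ∃ u, x + d u ∈ F s}

theorem homologyLevels_add_apply (F : σ → Submodule R M) (d : M →ₗ[R] M) (x y : M) :
    homologyLevels F d (x + d y) = homologyLevels F d x := by
  ext s
  constructor
  · rintro ⟨u, hu⟩
    exact ⟨y + u, by rwa [map_add, ← add_assoc]⟩
  · rintro ⟨u, hu⟩
    exact ⟨u - y, by rwa [map_sub, add_add_sub_cancel]⟩

theorem homologyLevels_subset_map {F : σ → Submodule R M} {F' : σ → Submodule R N}
    {d : M →ₗ[R] M} {d' : N →ₗ[R] N} {f : M →ₗ[R] N} (hfd : f ∘ₗ d = d' ∘ₗ f)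
    (hfF : ∀ s, (F s).map f ≤ F' s) (x : M) :
    homologyLevels F d x ⊆ homologyLevels F' d' (f x) := by
  rintro s ⟨u, hu⟩
  refine ⟨f u, ?_⟩
  have hfu := hfF s (Submodule.mem_map_of_mem hu)
  rwa [map_add, ← LinearMap.comp_apply, hfd, LinearMap.comp_apply] at hfu

theorem homologyLevels_map_eq {F : σ → Submodule R M} {F' : σ → Submodule R N}
    {d : M →ₗ[R] M} {d' : N →ₗ[R] N} {f : M →ₗ[R] N} {g : N →ₗ[R] M}
    (hfd : f ∘ₗ d = d' ∘ₗ f) (hgd : g ∘ₗ d' = d ∘ₗ g)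
    (hfF : ∀ s, (F s).map f ≤ F' s) (hgF : ∀ s, (F' s).map g ≤ F s)
    {x y : M} (hgfx : g (f x) = x + d y) :
    homologyLevels F' d' (f x) = homologyLevels F d x := by
  refine le_antisymm ?_ (homologyLevels_subset_map hfd hfF x)
  rw [← homologyLevels_add_apply F d x y, ← hgfx]
  exact homologyLevels_subset_map hgd hgF (f x)

theorem mem_range_of_map_mem_range {d : M →ₗ[R] M} {d' : N →ₗ[R] N} {f : M →ₗ[R] N}
    {g : N →ₗ[R] M} (hgd : g ∘ₗ d' = d ∘ₗ g) {x y : M} (hgfx : g (f x) = x + d y)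
    (hfx : f x ∈ LinearMap.range d') : x ∈ LinearMap.range d := by
  obtain ⟨u, hu⟩ := hfx
  refine ⟨g u - y, ?_⟩
  rw [map_sub, ← LinearMap.comp_apply, ← hgd, LinearMap.comp_apply, hu, hgfx, add_sub_cancel_right]

end HomologyLevels

theorem filtered_homotopy_equiv_preserves_grading_general
    {K : Type*} [Field K]
    {V V' : Type*} [AddCommGroup V] [Module K V] [AddCommGroup V'] [Module K V']
    {ι ι' : Type*}
    (v : Module.Basis ι K V) (v' : Module.Basis ι' K V')
    (w : ι → ℝ) (w' : ι' → ℝ)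
    (d : V →ₗ[K] V) (d' : V' →ₗ[K] V')
    (f : V →ₗ[K] V') (g : V' →ₗ[K] V) (H : V →ₗ[K] V)
    (hfd : f ∘ₗ d = d' ∘ₗ f) (hgd : g ∘ₗ d' = d ∘ₗ g)
    (hgf : g ∘ₗ f - LinearMap.id = H ∘ₗ d + d ∘ₗ H)
    (hfF : ∀ s : ℝ, (filtSub v w s).map f ≤ filtSub v' w' s)
    (hgF : ∀ s : ℝ, (filtSub v' w' s).map g ≤ filtSub v w s)
    (x : V) (hx : d x = 0) (hxr : x ∉ LinearMap.range d) :
    d' (f x) = 0 ∧ f x ∉ LinearMap.range d' ∧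
      filtGr v' w' d' (f x) = filtGr v w d x := by
  have hgfx : g (f x) = x + d (H x) := by
    have h := LinearMap.congr_fun hgf x
    simp only [LinearMap.sub_apply, LinearMap.comp_apply, LinearMap.id_apply, LinearMap.add_apply,
      hx, map_zero, zero_add] at h
    exact sub_eq_iff_eq_add'.mp h
  refine ⟨?_, fun hfx => hxr (mem_range_of_map_mem_range hgd hgfx hfx), ?_⟩
  · rw [← LinearMap.comp_apply, ← hfd, LinearMap.comp_apply, hx, map_zero]
  · exact congrArg sSup (homologyLevels_map_eq hfd hgd hfF hgF hgfx)

/-- A filtered chain homotopy equivalence between finite-dimensional weight-filtered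
complexes preserves the filtration grading of every nonzero homology class. -/
theorem filtered_homotopy_equiv_preserves_grading
    {K : Type*} [Field K]
    {V V' : Type*} [AddCommGroup V] [Module K V] [AddCommGroup V'] [Module K V']
    {ι ι' : Type*} [Fintype ι] [Fintype ι']
    (v : Module.Basis ι K V) (v' : Module.Basis ι' K V')
    (w : ι → ℝ) (w' : ι' → ℝ)
    (d : V →ₗ[K] V) (d' : V' →ₗ[K] V')
    (hd : d ∘ₗ d = 0) (hd' : d' ∘ₗ d' = 0)
    (hdF : ∀ s : ℝ, (filtSub v w s).map d ≤ filtSub v w s)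
    (hdF' : ∀ s : ℝ, (filtSub v' w' s).map d' ≤ filtSub v' w' s)
    (f : V →ₗ[K] V') (g : V' →ₗ[K] V) (H : V →ₗ[K] V) (H' : V' →ₗ[K] V')
    (hfd : f ∘ₗ d = d' ∘ₗ f) (hgd : g ∘ₗ d' = d ∘ₗ g)
    (hgf : g ∘ₗ f - LinearMap.id = H ∘ₗ d + d ∘ₗ H)
    (hfg : f ∘ₗ g - LinearMap.id = H' ∘ₗ d' + d' ∘ₗ H')
    (hfF : ∀ s : ℝ, (filtSub v w s).map f ≤ filtSub v' w' s)
    (hgF : ∀ s : ℝ, (filtSub v' w' s).map g ≤ filtSub v w s)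
    (hHF : ∀ s : ℝ, (filtSub v w s).map H ≤ filtSub v w s)
    (hHF' : ∀ s : ℝ, (filtSub v' w' s).map H' ≤ filtSub v' w' s)
    (x : V) (hx : d x = 0) (hxr : x ∉ LinearMap.range d) :
    d' (f x) = 0 ∧ f x ∉ LinearMap.range d' ∧
      filtGr v' w' d' (f x) = filtGr v w d x :=
  filtered_homotopy_equiv_preserves_grading_general v v' w w' d d' f g H hfd hgd hgf hfF hgF x hx
    hxr
end

section
/- Let K be a field and (V, (vᵢ)_{i∈ι}, w, d, F) a finite-dimensional weight-filtered complex as in the context. Let c ∈ ℝ, and let π : V → V be a linear map such that π ∘ d = d ∘ π, π(F_s) ⊆ F_s for all s ∈ ℝ, and the range of π is contained in the span of {vᵢ : w(i) = c}. Suppose x₀ ∈ V satisfies d x₀ = 0, π x₀ = x₀, and x₀ ∉ range d. Then Gr(x₀) = c. In particular, for every z ∈ V homologous to x₀ (i.e., z − x₀ ∈ range d), one has π z ≠ 0. -/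
namespace Module.Basis

variable {ι R M : Type*} [Semiring R] [AddCommMonoid M] [Module R M]

theorem mem_span_range_subtype_iff (b : Basis ι R M) (p : ι → Prop) {m : M} :
    m ∈ Submodule.span R (Set.range fun i : {i : ι // p i} => b i.1) ↔
      ∀ i ∈ (b.repr m).support, p i := by
  rw [show (Set.range fun i : {i : ι // p i} => b i.1) = b '' {i | p i} by
    rw [← Subtype.range_coe_subtype, ← Set.range_comp]; rfl]
  exact b.mem_span_image

theorem eq_zero_of_mem_span_range_subtype_of_disjoint (b : Basis ι R M) {p q : ι → Prop}
    (hpq : ∀ i, p i → ¬q i) {m : M}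
    (hp : m ∈ Submodule.span R (Set.range fun i : {i : ι // p i} => b i.1))
    (hq : m ∈ Submodule.span R (Set.range fun i : {i : ι // q i} => b i.1)) : m = 0 := by
  rw [mem_span_range_subtype_iff] at hp hq
  have hsupp : (b.repr m).support = ∅ :=
    Finset.eq_empty_of_forall_notMem fun i hi => hpq i (hp i hi) (hq i hi)
  simpa using hsupp

end Module.Basis

section Filtration

variable {K V ι : Type*} [Field K] [AddCommGroup V] [Module K V]
  (v : Module.Basis ι K V) (w : ι → ℝ)

theorem span_weight_eq_le_filtSub (c : ℝ) :
    Submodule.span K (Set.range fun i : {i : ι // w i = c} => v i.1) ≤ filtSub v w c :=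
  Submodule.span_mono <| by
    rintro _ ⟨⟨i, hi⟩, rfl⟩
    exact ⟨⟨i, hi.ge⟩, rfl⟩

theorem eq_zero_of_mem_filtSub_of_mem_span_weight_eq {c s : ℝ} (hcs : c < s) {x : V}
    (hs : x ∈ filtSub v w s)
    (hc : x ∈ Submodule.span K (Set.range fun i : {i : ι // w i = c} => v i.1)) : x = 0 :=
  v.eq_zero_of_mem_span_range_subtype_of_disjoint
    (fun _ hi hic => (hic ▸ hcs).not_ge hi) hs hc

end Filtration

theorem LinearMap.apply_add_ne_zero_of_notMem_range {R M : Type*} [Ring R] [AddCommGroup M]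
    [Module R M] {d π : M →ₗ[R] M} (hπd : π ∘ₗ d = d ∘ₗ π) {x₀ : M} (hπx₀ : π x₀ = x₀)
    (hx₀r : x₀ ∉ LinearMap.range d) (u : M) : π (x₀ + d u) ≠ 0 := by
  have hπ : π (x₀ + d u) = x₀ + d (π u) := by
    rw [map_add, hπx₀, ← LinearMap.comp_apply, hπd, LinearMap.comp_apply]
  intro h
  exact hx₀r ⟨-π u, by rw [map_neg, neg_eq_iff_eq_neg, ← add_eq_zero_iff_eq_neg', ← hπ, h]⟩

theorem grading_of_projected_cycle_general
    {K : Type*} [Field K]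
    {V : Type*} [AddCommGroup V] [Module K V]
    {ι : Type*}
    (v : Module.Basis ι K V) (w : ι → ℝ)
    (d : V →ₗ[K] V)
    (c : ℝ) (π : V →ₗ[K] V)
    (hπd : π ∘ₗ d = d ∘ₗ π)
    (hπF : ∀ s : ℝ, (filtSub v w s).map π ≤ filtSub v w s)
    (hπrange : LinearMap.range π ≤
      Submodule.span K (Set.range fun i : {i : ι // w i = c} => v i.1))
    (x₀ : V) (hπx₀ : π x₀ = x₀) (hx₀r : x₀ ∉ LinearMap.range d) :
    filtGr v w d x₀ = c ∧
      ∀ z : V, z - x₀ ∈ LinearMap.range d → π z ≠ 0 := by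
  have hne := LinearMap.apply_add_ne_zero_of_notMem_range hπd hπx₀ hx₀r
  refine ⟨IsGreatest.csSup_eq ⟨⟨0, ?_⟩, ?_⟩, ?_⟩
  · rw [map_zero, add_zero]
    exact span_weight_eq_le_filtSub v w c (hπx₀ ▸ hπrange ⟨x₀, rfl⟩)
  · rintro s ⟨u, hu⟩
    by_contra! hcs
    exact hne u <| eq_zero_of_mem_filtSub_of_mem_span_weight_eq v w hcs
      (hπF s ⟨_, hu, rfl⟩) (hπrange ⟨_, rfl⟩)
  · rintro z ⟨u, hu⟩
    simpa only [hu, add_sub_cancel] using hne u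

/-- If `π` is a filtered chain map whose range lies in the span of the basis vectors
of weight exactly `c`, and `x₀` is a cycle not a boundary with `π x₀ = x₀`, then the
filtration grading of the class of `x₀` is `c`, and every `z` homologous to `x₀` has
`π z ≠ 0`. -/
theorem grading_of_projected_cycle
    {K : Type*} [Field K]
    {V : Type*} [AddCommGroup V] [Module K V]
    {ι : Type*} [Fintype ι]
    (v : Module.Basis ι K V) (w : ι → ℝ)
    (d : V →ₗ[K] V) (hd : d ∘ₗ d = 0)
    (hdF : ∀ s : ℝ, (filtSub v w s).map d ≤ filtSub v w s)
    (c : ℝ) (π : V →ₗ[K] V)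
    (hπd : π ∘ₗ d = d ∘ₗ π)
    (hπF : ∀ s : ℝ, (filtSub v w s).map π ≤ filtSub v w s)
    (hπrange : LinearMap.range π ≤
      Submodule.span K (Set.range fun i : {i : ι // w i = c} => v i.1))
    (x₀ : V) (hx₀ : d x₀ = 0) (hπx₀ : π x₀ = x₀) (hx₀r : x₀ ∉ LinearMap.range d) :
    filtGr v w d x₀ = c ∧
      ∀ z : V, z - x₀ ∈ LinearMap.range d → π z ≠ 0 :=
  grading_of_projected_cycle_general v w d c π hπd hπF hπrange x₀ hπx₀ hx₀r
end

section
/- Let n ∈ ℝ and suppose (a₀, b₀) is a point lying in some member of 𝕊 such that (b₀ − a₀)/2 = n, every point (a,b) lying in some member of 𝕊 satisfies (b − a)/2 ≤ n, and (a₀, b₀) is the unique point of ⋃𝕊 with (b − a)/2 = n. Suppose moreover that f_𝕊(1) = (a₀ + b₀)/2. If t₀ ∈ [0,1) and there exists ε > 0 such that f_𝕊(s) = f_𝕊(t₀) + n·(s − t₀) for all s ∈ [t₀, t₀ + ε], then f_𝕊(t) = (1 − t/2)·a₀ + (t/2)·b₀ for all t ∈ [t₀, 1]. -/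
/-- If `(a₀,b₀)` is the unique point of `⋃𝕊` of maximal slope `n = (b₀-a₀)/2`, the value
at `t = 1` is `(a₀+b₀)/2`, and `f` has slope `n` just to the right of some `t₀ ∈ [0,1)`,
then `f` agrees with the affine function `t ↦ (1 - t/2)a₀ + (t/2)b₀` on all of `[t₀, 1]`. -/
theorem maxmin_max_slope_persists
    (𝕊 : Finset (Finset (ℤ × ℤ))) (hS : 𝕊.Nonempty)
    (hSne : ∀ S ∈ 𝕊, S.Nonempty)
    (f : ℝ → ℝ)
    (hf : ∀ t : ℝ, f t =
      𝕊.attach.sup' (Finset.attach_nonempty_iff.mpr hS) fun S =>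
        (S.1).inf' (hSne S.1 S.2) fun p =>
          (1 - t / 2) * (p.1 : ℝ) + (t / 2) * (p.2 : ℝ))
    (n : ℝ) (a₀ b₀ : ℤ)
    (hmem : ∃ S ∈ 𝕊, (a₀, b₀) ∈ S)
    (hn : ((b₀ : ℝ) - (a₀ : ℝ)) / 2 = n)
    (hmax : ∀ S ∈ 𝕊, ∀ p ∈ S, ((p.2 : ℝ) - (p.1 : ℝ)) / 2 ≤ n)
    (huniq : ∀ S ∈ 𝕊, ∀ p ∈ S, ((p.2 : ℝ) - (p.1 : ℝ)) / 2 = n → p = (a₀, b₀))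
    (hf1 : f 1 = ((a₀ : ℝ) + (b₀ : ℝ)) / 2)
    (t₀ : ℝ) (ht₀ : t₀ ∈ Set.Ico (0 : ℝ) 1)
    (hslope : ∃ ε : ℝ, 0 < ε ∧
      ∀ s ∈ Set.Icc t₀ (t₀ + ε), f s = f t₀ + n * (s - t₀)) :
    ∀ t ∈ Set.Icc t₀ 1, f t = (1 - t / 2) * (a₀ : ℝ) + (t / 2) * (b₀ : ℝ) := by
  -- One-sided Lipschitz: for s ≤ t, f t ≤ f s + n (t - s)
  have key : ∀ s t : ℝ, s ≤ t → f t ≤ f s + n * (t - s) := by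
    intro s t hst
    rw [hf t, hf s]
    apply Finset.sup'_le
    intro S hS'
    obtain ⟨q, hq, hqe⟩ := Finset.exists_mem_eq_inf' (hSne S.1 S.2)
      (fun p => (1 - s / 2) * (p.1 : ℝ) + (s / 2) * (p.2 : ℝ))
    have h1 : (S.1).inf' (hSne S.1 S.2)
        (fun p => (1 - t / 2) * (p.1 : ℝ) + (t / 2) * (p.2 : ℝ)) ≤
        (1 - t / 2) * (q.1 : ℝ) + (t / 2) * (q.2 : ℝ) := Finset.inf'_le _ hq
    have h2 := Finset.le_sup' (f := fun S : {x // x ∈ 𝕊} =>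
        (S.1).inf' (hSne S.1 S.2) fun p =>
          (1 - s / 2) * (p.1 : ℝ) + (s / 2) * (p.2 : ℝ)) hS'
    have h3 : ((q.2 : ℝ) - (q.1 : ℝ)) / 2 ≤ n := hmax S.1 S.2 q hq
    have h4 : (t - s) * (((q.2 : ℝ) - (q.1 : ℝ)) / 2) ≤ (t - s) * n :=
      mul_le_mul_of_nonneg_left h3 (by linarith)
    rw [hqe] at h2
    nlinarith [h1, h2, h4]
  obtain ⟨ε, hε, hsl⟩ := hslope
  have hfs₂ : f (t₀ + ε) = f t₀ + n * ε := by
    have := hsl (t₀ + ε) ⟨by linarith, le_refl _⟩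
    linarith [this]
  -- f (t₀+ε) = a₀ + n*t₀ + n*ε
  have hfs₂val : f (t₀ + ε) = (a₀ : ℝ) + n * t₀ + n * ε := by
    obtain ⟨S, hSmem, hSeq⟩ := Finset.exists_mem_eq_sup'
      (Finset.attach_nonempty_iff.mpr hS)
      (fun S : {x // x ∈ 𝕊} => (S.1).inf' (hSne S.1 S.2) fun p =>
        (1 - (t₀ + ε) / 2) * (p.1 : ℝ) + ((t₀ + ε) / 2) * (p.2 : ℝ))
    -- p : minimizer of the inf over S at time t₀
    obtain ⟨p, hp, hpe⟩ := Finset.exists_mem_eq_inf' (hSne S.1 S.2)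
      (fun p => (1 - t₀ / 2) * (p.1 : ℝ) + (t₀ / 2) * (p.2 : ℝ))
    -- f (t₀+ε) ≤ g_p (t₀+ε)
    have hle1 : f (t₀ + ε) ≤ (1 - (t₀ + ε) / 2) * (p.1 : ℝ) + ((t₀ + ε) / 2) * (p.2 : ℝ) := by
      rw [hf (t₀ + ε), hSeq]
      exact Finset.inf'_le _ hp
    -- g_p t₀ = inf at t₀ ≤ f t₀
    have hle2 : (1 - t₀ / 2) * (p.1 : ℝ) + (t₀ / 2) * (p.2 : ℝ) ≤ f t₀ := by
      rw [hf t₀, ← hpe]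
      exact Finset.le_sup' (f := fun S : {x // x ∈ 𝕊} =>
        (S.1).inf' (hSne S.1 S.2) fun p =>
          (1 - t₀ / 2) * (p.1 : ℝ) + (t₀ / 2) * (p.2 : ℝ)) hSmem
    have hge : n ≤ ((p.2 : ℝ) - (p.1 : ℝ)) / 2 := by
      have hdiff : ε * n ≤ ε * (((p.2 : ℝ) - (p.1 : ℝ)) / 2) := by nlinarith [hle1, hle2, hfs₂]
      exact le_of_mul_le_mul_left hdiff hε
    have hpeq : p = (a₀, b₀) :=
      huniq S.1 S.2 p hp (le_antisymm (hmax S.1 S.2 p hp) hge)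
    rw [hpeq] at hle1 hle2
    simp only at hle1 hle2
    -- upper: f(t₀+ε) ≤ L(t₀+ε) = a₀ + n(t₀+ε); lower: f(t₀+ε) = f t₀ + nε ≥ L(t₀) + nε
    have hL1 : (1 - (t₀ + ε) / 2) * (a₀ : ℝ) + ((t₀ + ε) / 2) * (b₀ : ℝ)
        = (a₀ : ℝ) + n * t₀ + n * ε := by linear_combination (t₀ + ε) * hn
    have hL2 : (1 - t₀ / 2) * (a₀ : ℝ) + (t₀ / 2) * (b₀ : ℝ) = (a₀ : ℝ) + n * t₀ := by
      linear_combination t₀ * hn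
    rw [hL1] at hle1
    rw [hL2] at hle2
    linarith [hfs₂]
  have hft₀val : f t₀ = (a₀ : ℝ) + n * t₀ := by linarith
  have hf1val : f 1 = (a₀ : ℝ) + n := by rw [hf1]; linarith
  intro t ht
  have h6 := key t₀ t ht.1
  have h7 := key t 1 ht.2
  have hval : f t = (a₀ : ℝ) + n * t :=
    le_antisymm (by nlinarith [h6, hft₀val]) (by nlinarith [h7, hf1val])
  linear_combination hval - t * hn
end

section
/- Let n ∈ ℝ and suppose (a₀, b₀) is a point lying in some member of 𝕊 such that (b₀ − a₀)/2 = n, every point (a,b) lying in some member of 𝕊 satisfies (b − a)/2 ≤ n, and (a₀, b₀) is the unique point of ⋃𝕊 with (b − a)/2 = n. If t₀ ∈ [0,2) and there exists ε > 0 with t₀ + ε ≤ 2 such that f_𝕊(s) = f_𝕊(t₀) + n·(s − t₀) for all s ∈ [t₀, t₀ + ε], then f_𝕊(t₀) = (1 − t₀/2)·a₀ + (t₀/2)·b₀. -/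
/-- If `(a₀,b₀)` is the unique point of `⋃𝕊` of maximal slope `n = (b₀-a₀)/2` and `f`
has slope `n` just to the right of `t₀ ∈ [0,2)`, then the value `f t₀` is realized at
the point `(a₀,b₀)`: `f t₀ = (1 - t₀/2)a₀ + (t₀/2)b₀`. -/
theorem maxmin_max_slope_value
    (𝕊 : Finset (Finset (ℤ × ℤ))) (hS : 𝕊.Nonempty)
    (hSne : ∀ S ∈ 𝕊, S.Nonempty)
    (f : ℝ → ℝ)
    (hf : ∀ t : ℝ, f t =
      𝕊.attach.sup' (Finset.attach_nonempty_iff.mpr hS) fun S =>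
        (S.1).inf' (hSne S.1 S.2) fun p =>
          (1 - t / 2) * (p.1 : ℝ) + (t / 2) * (p.2 : ℝ))
    (n : ℝ) (a₀ b₀ : ℤ)
    (hmem : ∃ S ∈ 𝕊, (a₀, b₀) ∈ S)
    (hn : ((b₀ : ℝ) - (a₀ : ℝ)) / 2 = n)
    (hmax : ∀ S ∈ 𝕊, ∀ p ∈ S, ((p.2 : ℝ) - (p.1 : ℝ)) / 2 ≤ n)
    (huniq : ∀ S ∈ 𝕊, ∀ p ∈ S, ((p.2 : ℝ) - (p.1 : ℝ)) / 2 = n → p = (a₀, b₀))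
    (t₀ : ℝ) (ht₀ : t₀ ∈ Set.Ico (0 : ℝ) 2)
    (hslope : ∃ ε : ℝ, 0 < ε ∧ t₀ + ε ≤ 2 ∧
      ∀ s ∈ Set.Icc t₀ (t₀ + ε), f s = f t₀ + n * (s - t₀)) :
    f t₀ = (1 - t₀ / 2) * (a₀ : ℝ) + (t₀ / 2) * (b₀ : ℝ) := by
  obtain ⟨ε, hε, hεle, hline⟩ := hslope
  -- for each s, choose a witness point realizing f s
  have key : ∀ s : ℝ, ∃ p : ℤ × ℤ, (∃ S ∈ 𝕊, p ∈ S) ∧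
      f s = (1 - s / 2) * (p.1 : ℝ) + (s / 2) * (p.2 : ℝ) := by
    intro s
    obtain ⟨S, hSmem, hSeq⟩ := Finset.exists_mem_eq_sup'
      (Finset.attach_nonempty_iff.mpr hS)
      (fun S : {x // x ∈ 𝕊} =>
        (S.1).inf' (hSne S.1 S.2) fun p =>
          (1 - s / 2) * (p.1 : ℝ) + (s / 2) * (p.2 : ℝ))
    obtain ⟨p, hpmem, hpeq⟩ := Finset.exists_mem_eq_inf' (hSne S.1 S.2)
      (fun p : ℤ × ℤ => (1 - s / 2) * (p.1 : ℝ) + (s / 2) * (p.2 : ℝ))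
    exact ⟨p, ⟨S.1, S.2, hpmem⟩, by rw [hf s, hSeq, hpeq]⟩
  choose F hFmem hFeq using key
  -- pigeonhole on the infinite interval
  have hinf : (Set.Icc t₀ (t₀ + ε)).Infinite :=
    Set.Icc_infinite (by linarith)
  have hmaps : Set.MapsTo F (Set.Icc t₀ (t₀ + ε)) ↑(𝕊.biUnion id) := by
    intro s _
    obtain ⟨S, hSmem, hpS⟩ := hFmem s
    simp only [Finset.coe_biUnion, Set.mem_iUnion, id]
    exact ⟨S, hSmem, hpS⟩
  obtain ⟨s₁, hs₁, s₂, hs₂, hne, hFeq12⟩ :=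
    hinf.exists_ne_map_eq_of_mapsTo hmaps (𝕊.biUnion id).finite_toSet
  have e₁ : (1 - s₁ / 2) * ((F s₁).1 : ℝ) + (s₁ / 2) * ((F s₁).2 : ℝ)
      = f t₀ + n * (s₁ - t₀) := by rw [← hFeq s₁, hline s₁ hs₁]
  have e₂ : (1 - s₂ / 2) * ((F s₁).1 : ℝ) + (s₂ / 2) * ((F s₁).2 : ℝ)
      = f t₀ + n * (s₂ - t₀) := by
    rw [hFeq12, ← hFeq s₂, hline s₂ hs₂]
  -- equal slopes
  have hzero : (s₁ - s₂) * ((((F s₁).2 : ℝ) - ((F s₁).1 : ℝ)) / 2 - n) = 0 := by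
    linear_combination e₁ - e₂
  have hslope' : (((F s₁).2 : ℝ) - ((F s₁).1 : ℝ)) / 2 = n := by
    rcases mul_eq_zero.mp hzero with h | h
    · exact absurd (by linarith : s₁ = s₂) hne
    · linarith
  obtain ⟨S, hSmem, hpS⟩ := hFmem s₁
  have hpeq : F s₁ = (a₀, b₀) := huniq S hSmem _ hpS hslope'
  rw [hpeq] at e₁
  simp only at e₁
  -- now conclude by linear algebra using hn
  linear_combination -e₁ + (s₁ - t₀) * hn
end
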